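/- For every natural number n, the Stieltjes constant γₙ exists: the sequence m ↦ Σ_{k=1}^{m} (log k)ⁿ / k − (log m)^{n+1}/(n+1) converges to a real limit as m → ∞. -/

import Mathlib

/-!
For `f` antitone and nonnegative on `[a, ∞)`, the sequence `∑_{a < k ≤ m} f k - ∫_a^m f` is
decreasing (each new term `f (m + 1)` is at most the integral over `[m, m + 1]`) and bounded
below (the sum dominates the integral up to the first term), hence convergent. Apply this to
`f x = (log x)ⁿ / x`, which is antitone for `x ≥ eⁿ` and has antiderivative
`(log x)ⁿ⁺¹ / (n + 1)`.
-/

open Filter Real Finset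

theorem AntitoneOn.exists_tendsto_sum_sub_integral {f : ℝ → ℝ} {x₀ : ℝ}
    (hf : AntitoneOn f (Set.Ici x₀)) (hf0 : ∀ x ≥ x₀, 0 ≤ f x) :
    ∃ c, Tendsto (fun j : ℕ => ∑ i ∈ range j, f (x₀ + (i + 1 : ℕ)) - ∫ x in x₀..x₀ + j, f x)
      atTop (nhds c) := by
  set u := fun j : ℕ => ∑ i ∈ range j, f (x₀ + (i + 1 : ℕ)) - ∫ x in x₀..x₀ + j, f x
  have hmono : ∀ a b : ℝ, x₀ ≤ a → AntitoneOn f (Set.Icc a b) := fun a b ha =>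
    hf.mono fun x hx => ha.trans hx.1
  have hint : ∀ a b : ℝ, x₀ ≤ a → a ≤ b → IntervalIntegrable f MeasureTheory.volume a b :=
    fun a b ha hab =>
      AntitoneOn.intervalIntegrable (by rw [Set.uIcc_of_le hab]; exact hmono a b ha)
  have hu_anti : Antitone u := by
    refine antitone_nat_of_succ_le fun j => ?_
    have hstep := (hmono (x₀ + j) (x₀ + j + (1 : ℕ)) (by simp)).sum_le_integral
    simp only [range_one, sum_singleton, zero_add] at hstep
    have hadd := intervalIntegral.integral_add_adjacent_intervals
      (hint x₀ (x₀ + j) le_rfl (by simp)) (hint (x₀ + j) (x₀ + j + 1) (by simp) (by simp))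
    simp only [u, sum_range_succ]
    push_cast at hstep hadd ⊢
    rw [← add_assoc, ← hadd]
    linarith
  have hu_bdd : BddBelow (Set.range u) := by
    refine ⟨-f x₀, ?_⟩
    rintro _ ⟨j, rfl⟩
    have hle := (hmono x₀ (x₀ + j) le_rfl).integral_le_sum
    have hshift := (sum_range_succ' (fun i : ℕ => f (x₀ + i)) j).symm.trans
      (sum_range_succ (fun i : ℕ => f (x₀ + i)) j)
    have := hf0 (x₀ + j) (by simp)
    simp only [Nat.cast_zero, add_zero] at hshift
    simp only [u]
    linarith
  exact ⟨_, tendsto_atTop_ciInf hu_anti hu_bdd⟩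

theorem AntitoneOn.exists_tendsto_sum_Icc_sub_of_hasDerivAt {f F : ℝ → ℝ} {a : ℕ}
    (hf : AntitoneOn f (Set.Ici a)) (hf0 : ∀ x ≥ (a : ℝ), 0 ≤ f x)
    (hF : ∀ x ≥ (a : ℝ), HasDerivAt F (f x) x) :
    ∃ c, Tendsto (fun m : ℕ => ∑ k ∈ Icc 1 m, f k - F m) atTop (nhds c) := by
  obtain ⟨c, hc⟩ := hf.exists_tendsto_sum_sub_integral hf0
  refine ⟨∑ k ∈ Icc 1 a, f k - F a + c, (tendsto_add_atTop_iff_nat a).mp ?_⟩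
  refine (tendsto_const_nhds.add hc).congr fun j => ?_
  have hsum : ∑ k ∈ Icc 1 (j + a), f k =
      ∑ k ∈ Icc 1 a, f k + ∑ i ∈ range j, f (a + (i + 1 : ℕ)) := by
    induction j with
    | zero => simp
    | succ j ih =>
      rw [add_right_comm, sum_Icc_succ_top (by omega), ih, sum_range_succ]
      push_cast; ring_nf
  have hFTC : ∫ x in (a : ℝ)..a + j, f x = F (a + j) - F a := by
    refine intervalIntegral.integral_eq_sub_of_hasDerivAt (fun x hx => hF x ?_)
      (AntitoneOn.intervalIntegrable (hf.mono ?_))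
    · rw [Set.uIcc_of_le (by simp)] at hx; exact hx.1
    · rw [Set.uIcc_of_le (by simp)]; exact fun x hx => hx.1
  rw [hsum, hFTC]
  push_cast
  ring_nf

theorem Real.pow_log_div_self_antitoneOn (n : ℕ) :
    AntitoneOn (fun x : ℝ => log x ^ n / x) (Set.Ici (exp n)) := by
  rcases eq_or_ne n 0 with rfl | hn
  · intro x hx y hy hxy
    simp only [pow_zero, one_div]
    exact inv_anti₀ ((exp_pos _).trans_le hx) hxy
  have hroot : ∀ x ∈ Set.Ici (exp n), log x ^ n / x = (log x / x ^ (n⁻¹ : ℝ)) ^ n :=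
    fun x hx => by rw [div_pow, rpow_inv_natCast_pow ((exp_pos _).le.trans hx) hn]
  have hanti := log_div_self_rpow_antitoneOn (a := (n : ℝ)⁻¹) (by positivity)
  rw [inv_inv] at hanti
  intro x hx y hy hxy
  simp only [hroot x hx, hroot y hy]
  have hy1 : 1 ≤ y := one_le_exp (Nat.cast_nonneg n) |>.trans hy
  exact pow_le_pow_left₀ (div_nonneg (log_nonneg hy1) (by positivity)) (hanti hx hy hxy) n

theorem Real.hasDerivAt_log_pow_succ_div_succ {x : ℝ} (hx : x ≠ 0) (n : ℕ) :
    HasDerivAt (fun y => log y ^ (n + 1) / (n + 1)) (log x ^ n / x) x := by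
  refine (((hasDerivAt_log hx).fun_pow (n + 1)).div_const ((n : ℝ) + 1)).congr_deriv ?_
  field_simp
  push_cast
  ring

/-- For every natural number n, the Stieltjes constant γₙ exists. -/
theorem stieltjes_constant_exists (n : ℕ) :
    ∃ γ : ℝ, Tendsto
      (fun m : ℕ => (∑ k ∈ Finset.Icc 1 m, (Real.log k) ^ n / k) -
        (Real.log m) ^ (n + 1) / (n + 1)) atTop (nhds γ) := by
  have hexp : exp n ≤ (⌈exp n⌉₊ : ℝ) := Nat.le_ceil _
  have hone : ∀ x ≥ (⌈exp n⌉₊ : ℝ), 1 ≤ x := fun x hx =>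
    (one_le_exp (Nat.cast_nonneg n)).trans (hexp.trans hx)
  obtain ⟨γ, hγ⟩ := ((pow_log_div_self_antitoneOn n).mono (Set.Ici_subset_Ici.2 hexp))
    |>.exists_tendsto_sum_Icc_sub_of_hasDerivAt
      (fun x hx => div_nonneg (pow_nonneg (log_nonneg (hone x hx)) n) (by linarith [hone x hx]))
      (fun x hx => hasDerivAt_log_pow_succ_div_succ (by linarith [hone x hx]) n)
  exact ⟨γ, hγ⟩
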